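/- Let t be an irrational number in (0,1) with continued fraction expansion (ζ_m) and convergents p_m/q_m. Fix s > 0 and define m_n by q_{m_n} ≤ 2^n − 1 < q_{m_n+1}. If ζ_{m_n+1} ≤ 1/(3s), then for every z ∈ [0, 1+t] and distinct words a, a' ∈ {1,2,3,4}^n (n sufficiently large), |φ_a(z) − φ_{a'}(z)| > s/4^n. -/

import Mathlib

/-- The four maps of the IFS `Φ_t`. -/
noncomputable def phiMap (t : ℝ) : Fin 4 → ℝ → ℝ :=
  ![fun x => x / 2, fun x => (x + 1) / 2, fun x => (x + t) / 2, fun x => (x + 1 + t) / 2]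

/-- Composition of the IFS maps along a word, `φ_a = φ_{a_1} ∘ ⋯ ∘ φ_{a_n}`. -/
noncomputable def phiWord (t : ℝ) (a : List (Fin 4)) : ℝ → ℝ :=
  a.foldr (fun i f => phiMap t i ∘ f) id

/-- The Gauss map. -/
noncomputable def gaussMap (x : ℝ) : ℝ := 1 / x - ⌊1 / x⌋

/-- `cfQuot t m = ζ_{m+1}`, the `(m+1)`-st partial quotient of `t`. -/
noncomputable def cfQuot (t : ℝ) (m : ℕ) : ℤ := ⌊1 / gaussMap^[m] t⌋

/-- `cfDen t m = q_m`, the denominator of the `m`-th continued fraction convergent of `t`: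
`q_0 = 1`, `q_1 = ζ_1`, `q_{m+2} = ζ_{m+2} q_{m+1} + q_m`. -/
noncomputable def cfDen (t : ℝ) : ℕ → ℤ
  | 0 => 1
  | 1 => cfQuot t 0
  | m + 2 => cfQuot t (m + 1) * cfDen t (m + 1) + cfDen t m

/-- Numerators of the convergents. -/
noncomputable def cfNum (t : ℝ) : ℕ → ℤ
  | 0 => 0
  | 1 => 1
  | m + 2 => cfQuot t (m + 1) * cfNum t (m + 1) + cfNum t m

section CF

variable {t : ℝ} (ht : Irrational t) (ht01 : t ∈ Set.Ioo (0:ℝ) 1)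

include ht ht01

lemma gauss_iter (m : ℕ) :
    Irrational (gaussMap^[m] t) ∧ gaussMap^[m] t ∈ Set.Ioo (0:ℝ) 1 := by
  induction m with
  | zero => exact ⟨ht, ht01⟩
  | succ m ih =>
    obtain ⟨hirr, h0, h1⟩ := ih
    rw [Function.iterate_succ_apply']
    have hinv : Irrational (1 / gaussMap^[m] t) := by
      simpa [one_div] using hirr.inv
    have hg : Irrational (gaussMap (gaussMap^[m] t)) := hinv.sub_intCast _
    have hfr : gaussMap (gaussMap^[m] t) = Int.fract (1 / gaussMap^[m] t) := rfl
    refine ⟨hg, ?_, ?_⟩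
    · rcases lt_or_eq_of_le (Int.fract_nonneg (1 / gaussMap^[m] t)) with h | h
      · rw [hfr]; exact h
      · exfalso
        rw [hfr, ← h] at hg
        exact hg.ne_int 0 (by norm_num)
    · rw [hfr]
      exact Int.fract_lt_one _

lemma cfQuot_pos (m : ℕ) : 1 ≤ cfQuot t m := by
  obtain ⟨_, h0, h1⟩ := gauss_iter ht ht01 m
  have : (1:ℝ) < 1 / gaussMap^[m] t := by
    rw [lt_div_iff₀ h0]; linarith
  unfold cfQuot
  exact Int.le_floor.2 (by exact_mod_cast this.le)

lemma gauss_key' (m : ℕ) :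
    gaussMap^[m] t * ((cfQuot t m : ℝ) + gaussMap^[m+1] t) = 1 := by
  have h0 := (gauss_iter ht ht01 m).2.1
  have h : gaussMap^[m+1] t = 1 / gaussMap^[m] t - cfQuot t m := by
    rw [Function.iterate_succ_apply']; rfl
  rw [h]
  field_simp
  ring

/-- Product of Gauss iterates. -/
noncomputable def cfProd (t : ℝ) (m : ℕ) : ℝ := ∏ k ∈ Finset.range (m+1), gaussMap^[k] t

lemma cfProd_pos (m : ℕ) : 0 < cfProd t m := by
  apply Finset.prod_pos
  intro k _
  exact (gauss_iter ht ht01 k).2.1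

omit ht ht01 in
lemma cfProd_succ (m : ℕ) : cfProd t (m+1) = cfProd t m * gaussMap^[m+1] t := by
  unfold cfProd
  rw [Finset.prod_range_succ]

lemma cfProd_succ_le (m : ℕ) : cfProd t (m+1) ≤ cfProd t m := by
  rw [cfProd_succ]
  have h := (gauss_iter ht ht01 (m+1)).2
  nlinarith [cfProd_pos ht ht01 m, h.1, h.2]

lemma cf_residual (m : ℕ) :
    (cfDen t m : ℝ) * t - cfNum t m = (-1)^m * cfProd t m := by
  induction m using Nat.twoStepInduction with
  | zero =>
    have h1 : cfDen t 0 = 1 := rfl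
    have h2 : cfNum t 0 = 0 := rfl
    have h3 : cfProd t 0 = t := by simp [cfProd]
    rw [h1, h2, h3]; push_cast; ring
  | one =>
    have hK := gauss_key' ht ht01 0
    have h00 : gaussMap^[0] t = t := rfl
    rw [h00] at hK
    have hprod : cfProd t 1 = t * gaussMap^[1] t := by
      simp [cfProd, Finset.prod_range_succ]
    have h1 : cfDen t 1 = cfQuot t 0 := rfl
    have h2 : cfNum t 1 = 1 := rfl
    rw [h1, h2, hprod]
    push_cast
    linear_combination hK
  | more m ih1 ih2 =>
    have hkey : gaussMap^[m+1] t * ((cfQuot t (m+1) : ℝ) + gaussMap^[m+2] t) = 1 :=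
      gauss_key' ht ht01 (m+1)
    have hq : (cfDen t (m+2) : ℝ) = (cfQuot t (m+1) : ℝ) * cfDen t (m+1) + cfDen t m := by
      push_cast [cfDen]; ring
    have hp : (cfNum t (m+2) : ℝ) = (cfQuot t (m+1) : ℝ) * cfNum t (m+1) + cfNum t m := by
      push_cast [cfNum]; ring
    have hprod1 : cfProd t (m+1) = cfProd t m * gaussMap^[m+1] t := cfProd_succ m
    have hprod2 : cfProd t (m+2) = cfProd t m * gaussMap^[m+1] t * gaussMap^[m+2] t := by
      have h := cfProd_succ (t := t) (m+1)
      rw [hprod1] at h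
      exact h
    have e1 : (cfDen t (m+1) : ℝ) * t - cfNum t (m+1)
        = -(-1)^m * (cfProd t m * gaussMap^[m+1] t) := by
      rw [ih2, hprod1]; ring
    have e2 : (cfDen t m : ℝ) * t - cfNum t m = (-1)^m * cfProd t m := ih1
    rw [hq, hp, hprod2]
    have hsgn2 : ((-1:ℝ))^(m+2) = (-1)^m := by ring
    rw [hsgn2]
    linear_combination (cfQuot t (m+1) : ℝ) * e1 + e2 - ((-1:ℝ)^m * cfProd t m) * hkey

omit ht ht01 in
lemma cf_det (m : ℕ) :
    cfNum t (m+1) * cfDen t m - cfNum t m * cfDen t (m+1) = (-1)^m := by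
  induction m with
  | zero => simp [cfNum, cfDen]
  | succ m ih =>
    have hq : cfDen t (m+2) = cfQuot t (m+1) * cfDen t (m+1) + cfDen t m := rfl
    have hp : cfNum t (m+2) = cfQuot t (m+1) * cfNum t (m+1) + cfNum t m := rfl
    rw [hq, hp]
    have : (-1:ℤ)^(m+1) = -(-1)^m := by ring
    rw [this, ← ih]
    ring

lemma cfDen_ge_one (m : ℕ) : 1 ≤ cfDen t m := by
  induction m using Nat.twoStepInduction with
  | zero => simp [cfDen]
  | one => simpa [cfDen] using cfQuot_pos ht ht01 0
  | more m ih1 ih2 =>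
    have hz := cfQuot_pos ht ht01 (m+1)
    have : cfDen t (m+2) = cfQuot t (m+1) * cfDen t (m+1) + cfDen t m := rfl
    rw [this]
    nlinarith

lemma cfDen_mono (m : ℕ) : cfDen t m ≤ cfDen t (m+1) := by
  cases m with
  | zero => simpa [cfDen] using cfQuot_pos ht ht01 0
  | succ m =>
    have hz := cfQuot_pos ht ht01 (m+1)
    have h1 := cfDen_ge_one ht ht01 m
    have h2 := cfDen_ge_one ht ht01 (m+1)
    have : cfDen t (m+2) = cfQuot t (m+1) * cfDen t (m+1) + cfDen t m := rfl
    rw [this]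
    nlinarith

lemma cf_sum_one (m : ℕ) :
    (cfDen t (m+1) : ℝ) * cfProd t m + (cfDen t m : ℝ) * cfProd t (m+1) = 1 := by
  have h1 := cf_residual ht ht01 m
  have h2 := cf_residual ht ht01 (m+1)
  have h3' : (cfNum t (m+1) : ℝ) * cfDen t m - cfNum t m * cfDen t (m+1) = (-1)^m := by
    exact_mod_cast cf_det (t := t) m
  have hsgn : ((-1:ℝ))^(m+1) = -(-1)^m := by ring
  rw [hsgn] at h2
  rcases Nat.even_or_odd m with hpar | hpar
  · rw [hpar.neg_one_pow] at h1 h2 h3'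
    linear_combination (-(cfDen t (m+1) : ℝ)) * h1 + (cfDen t m : ℝ) * h2 + h3'
  · rw [hpar.neg_one_pow] at h1 h2 h3'
    linear_combination (cfDen t (m+1) : ℝ) * h1 - (cfDen t m : ℝ) * h2 - h3'

lemma cfProd_lower (m : ℕ) :
    1 / ((cfDen t (m+1) : ℝ) + cfDen t m) ≤ cfProd t m := by
  have hs := cf_sum_one ht ht01 m
  have hle := cfProd_succ_le ht ht01 m
  have hq1 : (1:ℝ) ≤ cfDen t m := by exact_mod_cast cfDen_ge_one ht ht01 m
  have hq2 : (1:ℝ) ≤ cfDen t (m+1) := by exact_mod_cast cfDen_ge_one ht ht01 (m+1)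
  have hpos : (0:ℝ) < (cfDen t (m+1) : ℝ) + cfDen t m := by linarith
  rw [div_le_iff₀ hpos]
  nlinarith [cfProd_pos ht ht01 m, cfProd_pos ht ht01 (m+1)]

lemma best_approx (m : ℕ) (P Q : ℤ) (hQ0 : 0 < Q) (hQm : Q < cfDen t (m+1)) :
    cfProd t m ≤ |(Q:ℝ) * t - P| := by
  set x : ℤ := (-1)^m * (Q * cfNum t (m+1) - P * cfDen t (m+1)) with hxdef
  set y : ℤ := (-1)^m * (P * cfDen t m - Q * cfNum t m) with hydef
  have hdet := cf_det (t := t) m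
  have hee : ((-1:ℤ))^m * (-1)^m = 1 := by
    rw [← pow_add]; exact Even.neg_one_pow ⟨m, by ring⟩
  have hx : x * cfDen t m + y * cfDen t (m+1) = Q := by
    rw [hxdef, hydef]
    have : ((-1:ℤ))^m * (Q * cfNum t (m+1) - P * cfDen t (m+1)) * cfDen t m +
        (-1)^m * (P * cfDen t m - Q * cfNum t m) * cfDen t (m+1)
        = (-1)^m * Q * (cfNum t (m+1) * cfDen t m - cfNum t m * cfDen t (m+1)) := by ring
    rw [this, hdet]
    calc ((-1:ℤ))^m * Q * (-1)^m = ((-1)^m * (-1)^m) * Q := by ring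
    _ = Q := by rw [hee]; ring
  have hy : x * cfNum t m + y * cfNum t (m+1) = P := by
    rw [hxdef, hydef]
    have : ((-1:ℤ))^m * (Q * cfNum t (m+1) - P * cfDen t (m+1)) * cfNum t m +
        (-1)^m * (P * cfDen t m - Q * cfNum t m) * cfNum t (m+1)
        = (-1)^m * P * (cfNum t (m+1) * cfDen t m - cfNum t m * cfDen t (m+1)) := by ring
    rw [this, hdet]
    calc ((-1:ℤ))^m * P * (-1)^m = ((-1)^m * (-1)^m) * P := by ring
    _ = P := by rw [hee]; ring
  -- the residuals
  have h1 := cf_residual ht ht01 m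
  have h2 := cf_residual ht ht01 (m+1)
  have hsgn : ((-1:ℝ))^(m+1) = -(-1)^m := by ring
  rw [hsgn] at h2
  -- Q t - P = x * r m + y * r (m+1)
  have hrep : (Q:ℝ) * t - P = (-1)^m * ((x:ℝ) * cfProd t m - (y:ℝ) * cfProd t (m+1)) := by
    have hxR : (x:ℝ) * cfDen t m + (y:ℝ) * cfDen t (m+1) = Q := by exact_mod_cast hx
    have hyR : (x:ℝ) * cfNum t m + (y:ℝ) * cfNum t (m+1) = P := by exact_mod_cast hy
    calc (Q:ℝ) * t - P
        = ((x:ℝ) * cfDen t m + (y:ℝ) * cfDen t (m+1)) * t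
          - ((x:ℝ) * cfNum t m + (y:ℝ) * cfNum t (m+1)) := by rw [hxR, hyR]
      _ = (x:ℝ) * ((cfDen t m : ℝ) * t - cfNum t m)
          + (y:ℝ) * ((cfDen t (m+1) : ℝ) * t - cfNum t (m+1)) := by ring
      _ = (-1)^m * ((x:ℝ) * cfProd t m - (y:ℝ) * cfProd t (m+1)) := by
          rw [h1, h2]; ring
  have habs : |(Q:ℝ) * t - P| = |(x:ℝ) * cfProd t m - (y:ℝ) * cfProd t (m+1)| := by
    rw [hrep, abs_mul, abs_pow, abs_neg, abs_one, one_pow, one_mul]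
  rw [habs]
  have hPm := cfProd_pos ht ht01 m
  have hPm1 := cfProd_pos ht ht01 (m+1)
  have hple := cfProd_succ_le ht ht01 m
  have hq1 : 1 ≤ cfDen t m := cfDen_ge_one ht ht01 m
  have hq2 : 1 ≤ cfDen t (m+1) := cfDen_ge_one ht ht01 (m+1)
  rcases lt_trichotomy y 0 with hy0 | hy0 | hy0
  · -- y < 0  ⇒  x > 0
    have hx0 : 0 < x := by
      by_contra h
      push_neg at h
      have : x * cfDen t m ≤ 0 := mul_nonpos_of_nonpos_of_nonneg h (by linarith)
      have : y * cfDen t (m+1) ≤ -cfDen t (m+1) := by nlinarith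
      nlinarith
    have hx1 : (1:ℝ) ≤ (x:ℝ) := by exact_mod_cast hx0
    have hy1 : (y:ℝ) ≤ -1 := by
      have : y ≤ -1 := by omega
      exact_mod_cast this
    have : cfProd t m ≤ (x:ℝ) * cfProd t m - (y:ℝ) * cfProd t (m+1) := by nlinarith
    calc cfProd t m ≤ (x:ℝ) * cfProd t m - (y:ℝ) * cfProd t (m+1) := this
      _ ≤ |(x:ℝ) * cfProd t m - (y:ℝ) * cfProd t (m+1)| := le_abs_self _
  · -- y = 0 ⇒ x ≥ 1
    subst_vars
    rw [hy0] at hx ⊢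
    simp only [Int.cast_zero, zero_mul, sub_zero, zero_mul, add_zero] at hx ⊢
    have hx0 : 0 < x := by nlinarith
    have hx1 : (1:ℝ) ≤ (x:ℝ) := by exact_mod_cast hx0
    rw [abs_of_nonneg (by nlinarith)]
    nlinarith
  · -- y > 0 ⇒ x < 0
    have hx0 : x < 0 := by
      by_contra h
      push_neg at h
      have : y * cfDen t (m+1) ≥ cfDen t (m+1) := by nlinarith
      nlinarith [mul_nonneg h (by linarith : (0:ℤ) ≤ cfDen t m)]
    have hx1 : (x:ℝ) ≤ -1 := by
      have : x ≤ -1 := by omega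
      exact_mod_cast this
    have hy1 : (1:ℝ) ≤ (y:ℝ) := by exact_mod_cast hy0
    have : (x:ℝ) * cfProd t m - (y:ℝ) * cfProd t (m+1) ≤ -cfProd t m := by nlinarith
    calc cfProd t m ≤ -((x:ℝ) * cfProd t m - (y:ℝ) * cfProd t (m+1)) := by linarith
      _ ≤ |(x:ℝ) * cfProd t m - (y:ℝ) * cfProd t (m+1)| := neg_le_abs _

end CF

section IFS

/-- integer part of the translation of each map -/
def cP : Fin 4 → ℤ := ![0, 1, 0, 1]
/-- t-part of the translation of each map -/
def cQ : Fin 4 → ℤ := ![0, 0, 1, 1]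

lemma phiMap_eq (t : ℝ) (i : Fin 4) (x : ℝ) :
    phiMap t i x = (x + cP i + cQ i * t) / 2 := by
  fin_cases i <;> simp [phiMap, cP, cQ] <;> ring

lemma phiWord_cons (t : ℝ) (i : Fin 4) (l : List (Fin 4)) (z : ℝ) :
    phiWord t (i :: l) z = (phiWord t l z + cP i + cQ i * t) / 2 := by
  show phiMap t i (phiWord t l z) = _
  rw [phiMap_eq]

lemma phiWord_affine (t : ℝ) (l : List (Fin 4)) (z : ℝ) :
    phiWord t l z = z / 2 ^ l.length + phiWord t l 0 := by
  induction l generalizing z with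
  | nil => simp [phiWord]
  | cons i l ih =>
    rw [phiWord_cons, phiWord_cons, ih z, ih 0]
    simp [List.length_cons, pow_succ]
    ring

lemma phiWord_rep (t : ℝ) :
    ∀ a a' : List (Fin 4), a.length = a'.length →
    ∃ P Q : ℤ, (phiWord t a 0 - phiWord t a' 0) * 2 ^ a.length = P + Q * t ∧
      |P| ≤ 2 ^ a.length - 1 ∧ |Q| ≤ 2 ^ a.length - 1 ∧
      (a ≠ a' → ¬(P = 0 ∧ Q = 0)) := by
  intro a
  induction a with
  | nil =>
    intro a' hlen
    have : a' = [] := List.length_eq_zero_iff.mp hlen.symm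
    subst this
    exact ⟨0, 0, by simp, by simp, by simp, by simp⟩
  | cons i l ih =>
    intro a' hlen
    cases a' with
    | nil => simp at hlen
    | cons i' l' =>
      have hlen' : l.length = l'.length := by simpa using hlen
      obtain ⟨P, Q, hPQ, hP, hQ, hne⟩ := ih l' hlen'
      set n := l.length with hn
      refine ⟨P + (cP i - cP i') * 2 ^ n, Q + (cQ i - cQ i') * 2 ^ n, ?_, ?_, ?_, ?_⟩
      · rw [phiWord_cons, phiWord_cons]
        have : (i :: l).length = n + 1 := by simp [hn]
        rw [this]
        push_cast
        rw [pow_succ]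
        field_simp
        linarith [hPQ]
      · have h1 : |cP i - cP i'| ≤ 1 := by fin_cases i <;> fin_cases i' <;> simp [cP]
        have : (i :: l).length = n + 1 := by simp [hn]
        rw [this, pow_succ]
        calc |P + (cP i - cP i') * 2 ^ n| ≤ |P| + |(cP i - cP i') * 2 ^ n| := abs_add_le _ _
          _ ≤ (2^n - 1) + 1 * 2^n := by
              rw [abs_mul]
              have : (0:ℤ) ≤ 2^n := by positivity
              have h2 : |(2:ℤ)^n| = 2^n := abs_of_nonneg this
              rw [h2]
              have := mul_le_mul_of_nonneg_right h1 this
              linarith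
          _ ≤ 2^n * 2 - 1 := by linarith
      · have h1 : |cQ i - cQ i'| ≤ 1 := by fin_cases i <;> fin_cases i' <;> simp [cQ]
        have : (i :: l).length = n + 1 := by simp [hn]
        rw [this, pow_succ]
        calc |Q + (cQ i - cQ i') * 2 ^ n| ≤ |Q| + |(cQ i - cQ i') * 2 ^ n| := abs_add_le _ _
          _ ≤ (2^n - 1) + 1 * 2^n := by
              rw [abs_mul]
              have : (0:ℤ) ≤ 2^n := by positivity
              have h2 : |(2:ℤ)^n| = 2^n := abs_of_nonneg this
              rw [h2]
              have := mul_le_mul_of_nonneg_right h1 this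
              linarith
          _ ≤ 2^n * 2 - 1 := by linarith
      · intro hne'
        by_cases hii : i = i'
        · subst hii
          have hll : l ≠ l' := by
            intro h; exact hne' (by rw [h])
          have := hne hll
          intro ⟨hP0, hQ0⟩
          simp at hP0 hQ0
          exact this ⟨hP0, hQ0⟩
        · have hd : cP i - cP i' ≠ 0 ∨ cQ i - cQ i' ≠ 0 := by
            fin_cases i <;> fin_cases i' <;> simp_all [cP, cQ]
          intro ⟨hP0, hQ0⟩
          rcases hd with hd | hd
          · have h1 : 1 ≤ |cP i - cP i'| := Int.one_le_abs hd
            have h2 : (2:ℤ)^n ≤ |(cP i - cP i') * 2^n| := by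
              rw [abs_mul, abs_of_nonneg (by positivity : (0:ℤ) ≤ 2^n)]
              nlinarith [pow_pos (by norm_num : (0:ℤ) < 2) n]
            have h3 : |(cP i - cP i') * 2 ^ n| ≤ |P| := by
              have : (cP i - cP i') * 2 ^ n = -P := by linarith [hP0]
              rw [this, abs_neg]
            have hPp : (2:ℤ)^n ≤ 2^n - 1 := le_trans h2 (le_trans h3 hP)
            linarith
          · have h1 : 1 ≤ |cQ i - cQ i'| := Int.one_le_abs hd
            have h2 : (2:ℤ)^n ≤ |(cQ i - cQ i') * 2^n| := by
              rw [abs_mul, abs_of_nonneg (by positivity : (0:ℤ) ≤ 2^n)]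
              nlinarith [pow_pos (by norm_num : (0:ℤ) < 2) n]
            have h3 : |(cQ i - cQ i') * 2 ^ n| ≤ |Q| := by
              have : (cQ i - cQ i') * 2 ^ n = -Q := by linarith [hQ0]
              rw [this, abs_neg]
            have hQp : (2:ℤ)^n ≤ 2^n - 1 := le_trans h2 (le_trans h3 hQ)
            linarith

end IFS

/-- If `m_n` satisfies `q_{m_n} ≤ 2^n − 1 < q_{m_n+1}` and the partial quotient
`ζ_{m_n+1} ≤ 1/(3s)`, then (for `n` large) the level-`n` images of any `z ∈ [0,1+t]`
are `s/4^n`-separated. -/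
theorem partial_quotient_separation (t : ℝ) (ht : Irrational t)
    (ht01 : t ∈ Set.Ioo (0:ℝ) 1) (s : ℝ) (hs : 0 < s) :
    ∃ N : ℕ, ∀ n ≥ N, ∀ m : ℕ,
      ((cfDen t m : ℝ) ≤ 2 ^ n - 1 ∧ (2:ℝ) ^ n - 1 < (cfDen t (m + 1) : ℝ)) →
      (cfQuot t m : ℝ) ≤ 1 / (3 * s) →
      ∀ z ∈ Set.Icc (0:ℝ) (1 + t), ∀ a a' : Fin n → Fin 4, a ≠ a' →
        s / 4 ^ n < |phiWord t (List.ofFn a) z - phiWord t (List.ofFn a') z| := by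
  obtain ⟨N0, hN0⟩ : ∃ N0 : ℕ, s < 2 ^ N0 := pow_unbounded_of_one_lt s (by norm_num)
  refine ⟨N0 + 1, fun n hn m ⟨hm1, hm2⟩ hζ z _ a a' haa' => ?_⟩
  have hn1 : 1 ≤ n := le_trans (Nat.le_add_left 1 N0) hn
  have hs2n : s < 2 ^ n := lt_of_lt_of_le hN0 (by
    apply pow_le_pow_right₀ (by norm_num)
    omega)
  -- reduce to the translation parts
  have hlen : (List.ofFn a).length = n := List.length_ofFn (f := a)
  have hlen' : (List.ofFn a').length = n := List.length_ofFn (f := a')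
  have hz : phiWord t (List.ofFn a) z - phiWord t (List.ofFn a') z
      = phiWord t (List.ofFn a) 0 - phiWord t (List.ofFn a') 0 := by
    rw [phiWord_affine t (List.ofFn a) z, phiWord_affine t (List.ofFn a') z, hlen, hlen']
    ring
  obtain ⟨P, Q, hPQ, hP, hQ, hne⟩ := phiWord_rep t (List.ofFn a) (List.ofFn a')
    (by rw [hlen, hlen'])
  rw [hlen] at hPQ hP hQ
  have hlne : List.ofFn a ≠ List.ofFn a' := fun h => haa' (List.ofFn_injective h)
  have hne' := hne hlne
  have h2npos : (0:ℝ) < 2 ^ n := by positivity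
  -- key: s / 2^n < |P + Q t|
  have key : s / 2 ^ n < |(P:ℝ) + Q * t| := by
    by_cases hQ0 : Q = 0
    · subst hQ0
      have hP0 : P ≠ 0 := fun h => hne' ⟨h, rfl⟩
      have h1 : (1:ℝ) ≤ |(P:ℝ)| := by exact_mod_cast Int.one_le_abs hP0
      have h2 : s / 2 ^ n < 1 := (div_lt_one h2npos).mpr hs2n
      have h3 : s / 2 ^ n < |(P:ℝ)| := lt_of_lt_of_le h2 h1
      simpa using h3
    · -- Q ≠ 0 : use best approximation
      have hQabs : |Q| < cfDen t (m+1) := by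
        have hQr : (|Q| : ℝ) ≤ 2 ^ n - 1 := by exact_mod_cast hQ
        have : (|Q| : ℝ) < (cfDen t (m+1) : ℝ) := lt_of_le_of_lt hQr hm2
        exact_mod_cast this
      have hQpos : 0 < |Q| := abs_pos.mpr hQ0
      have hba : cfProd t m ≤ |((|Q| : ℤ) : ℝ) * t - ((-(Int.sign Q) * P : ℤ) : ℝ)| :=
        best_approx ht ht01 m (-(Int.sign Q) * P) |Q| hQpos hQabs
      have habs_eq : |((|Q| : ℤ) : ℝ) * t - ((-(Int.sign Q) * P : ℤ) : ℝ)| = |(P:ℝ) + Q * t| := by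
        rcases lt_or_gt_of_ne hQ0 with h | h
        · have h1 : |Q| = -Q := abs_of_neg h
          have h2 : Int.sign Q = -1 := Int.sign_eq_neg_one_of_neg h
          rw [h1, h2]
          push_cast
          rw [show -(Q:ℝ) * t - 1 * P = -((P:ℝ) + Q * t) by ring, abs_neg]
        · have h1 : |Q| = Q := abs_of_pos h
          have h2 : Int.sign Q = 1 := Int.sign_eq_one_of_pos h
          rw [h1, h2]
          push_cast
          rw [show (Q:ℝ) * t - -1 * P = (P:ℝ) + Q * t by ring]
      rw [habs_eq] at hba
      -- lower bound cfProd t m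
      have hlow := cfProd_lower ht ht01 m
      -- bound q_{m+1} + q_m
      have hζ1 : (1:ℝ) ≤ (cfQuot t m : ℝ) := by exact_mod_cast cfQuot_pos ht ht01 m
      have hs13 : 3 * s ≤ 1 := by
        have h' : (1:ℝ) ≤ 1 / (3*s) := le_trans hζ1 hζ
        have h3s : (0:ℝ) < 3 * s := by linarith
        rw [le_div_iff₀ h3s, one_mul] at h'
        exact h'
      have hq_m_pos : (1:ℝ) ≤ (cfDen t m : ℝ) := by exact_mod_cast cfDen_ge_one ht ht01 m
      have hsum_bound : (cfDen t (m+1) : ℝ) + cfDen t m ≤ ((cfQuot t m : ℝ) + 2) * cfDen t m := by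
        cases m with
        | zero =>
          have : cfDen t 1 = cfQuot t 0 := rfl
          rw [this]
          have : cfDen t 0 = 1 := rfl
          rw [this]
          push_cast
          nlinarith [hζ1]
        | succ k =>
          have hrec : cfDen t (k+2) = cfQuot t (k+1) * cfDen t (k+1) + cfDen t k := rfl
          have hmono : (cfDen t k : ℝ) ≤ (cfDen t (k+1) : ℝ) := by
            exact_mod_cast cfDen_mono ht ht01 k
          have : (cfDen t (k+2) : ℝ) = (cfQuot t (k+1) : ℝ) * cfDen t (k+1) + cfDen t k := by
            rw [hrec]; push_cast; ring
          rw [this]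
          linarith
      have hsum_pos : (0:ℝ) < (cfDen t (m+1) : ℝ) + cfDen t m := by
        have : (1:ℝ) ≤ (cfDen t (m+1) : ℝ) := by exact_mod_cast cfDen_ge_one ht ht01 (m+1)
        linarith
      have hfinal : s / 2^n < 1 / ((cfDen t (m+1) : ℝ) + cfDen t m) := by
        rw [div_lt_div_iff₀ h2npos hsum_pos]
        have hb2 : ((cfQuot t m : ℝ) + 2) * cfDen t m ≤ (1/(3*s) + 2) * (2^n - 1) := by
          apply mul_le_mul (by linarith) hm1 (by linarith) (by positivity)
        have h3s : 0 < 3 * s := by linarith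
        have : s * (((cfQuot t m : ℝ) + 2) * cfDen t m) ≤ s * ((1/(3*s) + 2) * (2^n - 1)) :=
          mul_le_mul_of_nonneg_left hb2 (le_of_lt hs)
        have heq : s * ((1/(3*s) + 2) * (2^n - 1)) = (1/3 + 2*s) * (2^n - 1) := by
          field_simp
        have h2n1 : (1:ℝ) ≤ 2^n - 1 := by
          have : (2:ℝ)^1 ≤ 2^n := pow_le_pow_right₀ (by norm_num) hn1
          norm_num at this
          linarith
        have hlt : (1/3 + 2*s) * (2^n - 1) < 2^n := by nlinarith
        calc s * ((cfDen t (m+1) : ℝ) + cfDen t m)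
            ≤ s * (((cfQuot t m : ℝ) + 2) * cfDen t m) :=
              mul_le_mul_of_nonneg_left hsum_bound (le_of_lt hs)
          _ ≤ (1/3 + 2*s) * (2^n - 1) := by rw [← heq]; exact this
          _ < 2^n := hlt
          _ = 1 * 2^n := (one_mul _).symm
      calc s / 2^n < 1 / ((cfDen t (m+1) : ℝ) + cfDen t m) := hfinal
        _ ≤ cfProd t m := hlow
        _ ≤ |(P:ℝ) + Q * t| := hba
  -- conclude
  rw [hz]
  have habs : |phiWord t (List.ofFn a) 0 - phiWord t (List.ofFn a') 0|
      = |(P:ℝ) + Q * t| / 2 ^ n := by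
    rw [← hPQ, abs_mul, abs_of_pos h2npos, mul_div_cancel_right₀ _ (ne_of_gt h2npos)]
  rw [habs]
  rw [div_lt_div_iff₀ (by positivity) h2npos]
  have h4n : (4:ℝ)^n = 2^n * 2^n := by
    rw [show (4:ℝ) = 2 * 2 by norm_num, mul_pow]
  rw [h4n]
  have := (div_lt_iff₀ h2npos).mp key
  nlinarith [key, h2npos]
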